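/- Let φ be a positive long root perpendicular to the highest root θ, and let w ∈ W be the minimal-length element with wφ = θ. Then wθ is a positive root perpendicular to θ, lying in the span of the simple roots perpendicular to θ, and the set {θ} ∪ {θ − ψ : ψ ∈ Φ_w} ∪ {wθ} corresponds to an abelian ideal a^{φ,min⁺} = a^{φ,min} ⊕ g_{wθ} of b. -/

import Mathlib

open scoped RealInnerProductSpace BigOperators

noncomputable section

variable (V : Type) [NormedAddCommGroup V] [InnerProductSpace ℝ V] [FiniteDimensional ℝ V]

/-- A finite, reduced, crystallographic root system in a Euclidean space `V`,
with a chosen set of positive roots and the corresponding simple roots. -/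
structure RootSystemData where
  /-- the rank -/
  l : ℕ
  /-- the simple roots -/
  simple : Fin l → V
  /-- the set of roots -/
  roots : Finset V
  /-- the set of positive roots -/
  pos : Finset V
  pos_subset : pos ⊆ roots
  simple_mem_pos : ∀ i, simple i ∈ pos
  simple_indep : LinearIndependent ℝ simple
  span_roots : Submodule.span ℝ (roots : Set V) = ⊤
  root_ne_zero : ∀ α ∈ roots, α ≠ 0
  neg_mem : ∀ α ∈ roots, -α ∈ roots
  pos_iff : ∀ α ∈ roots, (α ∈ pos ↔ -α ∉ pos)
  pos_combo : ∀ α ∈ pos, ∃ c : Fin l → ℕ, α = ∑ i, (c i : ℝ) • simple i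
  crystal : ∀ α ∈ roots, ∀ β ∈ roots, ∃ n : ℤ, 2 * ⟪β, α⟫ / ⟪α, α⟫ = (n : ℝ)
  reflect_mem : ∀ α ∈ roots, ∀ β ∈ roots, β - (2 * ⟪β, α⟫ / ⟪α, α⟫) • α ∈ roots
  sub_mem : ∀ α ∈ roots, ∀ β ∈ roots, 0 < ⟪α, β⟫ → α ≠ β → α - β ∈ roots
  reduced : ∀ α ∈ roots, ∀ c : ℝ, c • α ∈ roots → c = 1 ∨ c = -1

namespace RootSystemData

open Classical

variable {V}

/-- The pairing `⟨λ, α∨⟩ = 2(λ|α)/(α|α)` of a vector with the coroot of `α`. -/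
def pair (lam α : V) : ℝ := 2 * ⟪lam, α⟫ / ⟪α, α⟫

/-- The orthogonal reflection in the hyperplane orthogonal to `α`. -/
def sRefl (α : V) : V ≃ₗᵢ[ℝ] V := Submodule.reflection ((ℝ ∙ α)ᗮ)

variable (R : RootSystemData V)

/-- Half the sum of the positive roots. -/
def ρ : V := (2 : ℝ)⁻¹ • ∑ φ ∈ R.pos, φ

/-- The (finite) Weyl group, generated by the simple reflections. -/
def W : Subgroup (V ≃ₗᵢ[ℝ] V) :=
  Subgroup.closure (Set.range fun i => sRefl (R.simple i))

/-- The length of a Weyl group element: the minimal length of a word in the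
simple reflections expressing it. -/
def len (w : V ≃ₗᵢ[ℝ] V) : ℕ :=
  sInf {k : ℕ | ∃ f : Fin k → Fin R.l,
    w = (List.ofFn fun j => sRefl (R.simple (f j))).prod}

/-- The inversion set `Φ_w = Φ₊ ∩ wΦ₋`. -/
def inversions (w : V ≃ₗᵢ[ℝ] V) : Finset V :=
  R.pos.filter fun x => -(w.symm x) ∈ R.pos

end RootSystemData

/-- An irreducible root system, together with its highest root `θ`. -/
structure IrredRootSystemData extends RootSystemData V where
  /-- the highest root -/
  θ : V
  θ_mem_pos : θ ∈ pos
  θ_highest : ∀ φ ∈ pos, ∃ c : Fin l → ℕ, θ - φ = ∑ i, (c i : ℝ) • simple i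
  θ_long : ∀ φ ∈ roots, ‖φ‖ ≤ ‖θ‖
  θ_dominant : ∀ i, 0 ≤ ⟪θ, simple i⟫
  irreducible : ∀ s : Finset V, s ⊆ roots →
      (∀ α ∈ s, ∀ β ∈ roots, β ∉ s → ⟪α, β⟫ = 0) → s = ∅ ∨ s = roots

namespace IrredRootSystemData

variable {V} (R : IrredRootSystemData V)

/-- The affine functional `L(φ) = 2(θ−φ|ρ)/(θ|θ)`. -/
def L (φ : V) : ℝ := 2 * ⟪R.θ - φ, R.toRootSystemData.ρ⟫ / ⟪R.θ, R.θ⟫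

/-- A root is long if it has the same length as the highest root. -/
def IsLong (φ : V) : Prop := ‖φ‖ = ‖R.θ‖

/-- The dual Coxeter number `g = ⟨ρ, θ∨⟩ + 1`. -/
def dualCox : ℝ := RootSystemData.pair R.toRootSystemData.ρ R.θ + 1

/-- The affine reflection `s₀(λ) = λ − (⟨λ,θ∨⟩ − g)θ` (scaled so that `s₀ρ = ρ + θ`). -/
def s0 (lam : V) : V := lam - (RootSystemData.pair lam R.θ - R.dualCox) • R.θ

end IrredRootSystemData

section Aux

/-!
Write `Φ_w` for the inversion set of `w`. Since `∑_{ψ ∈ Φ_w} ψ = ρ - wρ` and `w⁻¹θ = φ`, the value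
`L(φ)` equals `∑_{ψ ∈ Φ_w} ⟨ψ, θ∨⟩`. Each term is at most `1`, because a root `ψ ≠ θ` no longer
than `θ` has `⟨ψ, θ∨⟩ ≤ 1` and `θ ∉ Φ_w` (as `w⁻¹θ = φ > 0`); on the other hand
`|Φ_w| ≤ ℓ(w) = L(φ)`. Hence `|Φ_w| = ℓ(w)` and `⟨ψ, θ∨⟩ = 1` for every `ψ ∈ Φ_w`.
Consequently `wθ > 0` (otherwise `-wθ ∈ Φ_w` would be orthogonal to `θ`), each `θ - ψ` is a
positive root, and `wθ`, `θ`, `θ - ψ` are pairwise distinct, having inner products `0`, `(θ|θ)`,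
`(θ|θ)/2` with `θ`. Finally `ρ + ∑ Ψ' = (ℓ(w) + 1)θ + w(ρ + θ)`, and the normalisation
`(θ|θ) = 1/g`, i.e. `2(ρ|θ) + (θ|θ) = 1`, turns its squared norm into Kostant's criterion.
-/

namespace RootSystemData

open Classical

variable {V : Type} [NormedAddCommGroup V] [InnerProductSpace ℝ V]

lemma sRefl_apply (α x : V) : sRefl α x = x - pair x α • α := by
  unfold sRefl pair
  rw [Submodule.reflection_orthogonal_apply, Submodule.reflection_singleton_apply,
    real_inner_self_eq_norm_sq, real_inner_comm x, two_smul]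
  match_scalars
  · simp only [RCLike.ofReal_real_eq_id, id_eq]
    ring
  · ring

lemma sRefl_inv (α : V) : (sRefl α)⁻¹ = sRefl α := Submodule.reflection_inv

lemma sRefl_symm (α : V) : (sRefl α).symm = sRefl α := Submodule.reflection_symm

lemma sRefl_sRefl (α x : V) : sRefl α (sRefl α x) = x := Submodule.reflection_reflection _ _

lemma two_mul_inner_eq_of_pair_eq_one {β α : V} (hα : α ≠ 0) (h : pair β α = 1) :
    2 * ⟪β, α⟫ = ⟪α, α⟫ := by
  rwa [pair, div_eq_one_iff_eq (inner_self_ne_zero.mpr hα)] at h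

variable (R : RootSystemData V)

lemma mem_inversions {w : V ≃ₗᵢ[ℝ] V} {x : V} :
    x ∈ R.inversions w ↔ x ∈ R.pos ∧ -(w.symm x) ∈ R.pos :=
  Finset.mem_filter

lemma inversions_subset_pos (w : V ≃ₗᵢ[ℝ] V) : R.inversions w ⊆ R.pos :=
  Finset.filter_subset _ _

lemma neg_mem_pos_of_notMem_pos {α : V} (hα : α ∈ R.roots) (h : α ∉ R.pos) : -α ∈ R.pos :=
  (R.pos_iff _ (R.neg_mem α hα)).mpr (by rwa [neg_neg])

lemma neg_notMem_pos {α : V} (hα : α ∈ R.pos) : -α ∉ R.pos :=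
  (R.pos_iff α (R.pos_subset hα)).mp hα

lemma sRefl_mem_roots {α β : V} (hα : α ∈ R.roots) (hβ : β ∈ R.roots) :
    sRefl α β ∈ R.roots := by
  rw [sRefl_apply]
  exact R.reflect_mem α hα β hβ

lemma mem_pos_of_eq_sum_nsmul_simple {α : V} (hα : α ∈ R.roots) {c : Fin R.l → ℕ}
    (hc : α = ∑ i, (c i : ℝ) • R.simple i) : α ∈ R.pos := by
  by_contra hpos
  obtain ⟨d, hd⟩ := R.pos_combo _ (R.neg_mem_pos_of_notMem_pos hα hpos)
  have hsum : ∑ i, ((c i : ℝ) + d i) • R.simple i = ∑ i, (0 : ℝ) • R.simple i := by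
    simp only [add_smul, Finset.sum_add_distrib, zero_smul, Finset.sum_const_zero, ← hc, ← hd,
      add_neg_cancel]
  have hcoeff := Fintype.linearIndependent_iffₛ.mp R.simple_indep _ _ hsum
  refine R.root_ne_zero α hα (hc ▸ Finset.sum_eq_zero fun i _ => ?_)
  have hci : (c i : ℝ) = 0 := by linarith [hcoeff i, (d i).cast_nonneg (α := ℝ)]
  rw [hci, zero_smul]

lemma sRefl_simple_mem_pos {i : Fin R.l} {β : V} (hβ : β ∈ R.pos) (hne : β ≠ R.simple i) :
    sRefl (R.simple i) β ∈ R.pos := by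
  have hαi := R.pos_subset (R.simple_mem_pos i)
  by_contra hneg
  obtain ⟨b, hb⟩ := R.pos_combo β hβ
  obtain ⟨d, hd⟩ := R.pos_combo _
    (R.neg_mem_pos_of_notMem_pos (R.sRefl_mem_roots hαi (R.pos_subset hβ)) hneg)
  -- `β - sβ ∈ ℝ αᵢ`, so `β` has no coefficient outside `i`
  have hsum : ∑ j, ((b j : ℝ) + d j) • R.simple j =
      ∑ j, (if j = i then pair β (R.simple i) else 0) • R.simple j := by
    simp only [add_smul, Finset.sum_add_distrib, ite_smul, zero_smul, Finset.sum_ite_eq',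
      Finset.mem_univ, if_true, ← hb, ← hd, sRefl_apply]
    abel
  have hcoeff := Fintype.linearIndependent_iffₛ.mp R.simple_indep _ _ hsum
  have hβi : β = (b i : ℝ) • R.simple i := by
    refine hb.trans (Finset.sum_eq_single i (fun j _ hj => ?_) (by simp))
    have := hcoeff j
    rw [if_neg hj] at this
    rw [show (b j : ℝ) = 0 by linarith [(b j).cast_nonneg (α := ℝ), (d j).cast_nonneg (α := ℝ)],
      zero_smul]
  rcases R.reduced _ hαi (b i) (hβi ▸ R.pos_subset hβ) with h | h
  · exact hne (by rw [hβi, h, one_smul])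
  · linarith [(b i).cast_nonneg (α := ℝ)]

lemma mem_span_simple_of_inner_eq_zero {lam β : V} (hlam : ∀ i, 0 ≤ ⟪lam, R.simple i⟫)
    (hβ : β ∈ R.pos) (h : ⟪β, lam⟫ = 0) :
    β ∈ Submodule.span ℝ {α : V | ∃ i, ⟪R.simple i, lam⟫ = 0 ∧ α = R.simple i} := by
  obtain ⟨c, hc⟩ := R.pos_combo β hβ
  have hterm : ∀ i ∈ Finset.univ, 0 ≤ (c i : ℝ) * ⟪R.simple i, lam⟫ := fun i _ =>
    mul_nonneg (c i).cast_nonneg (real_inner_comm lam _ ▸ hlam i)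
  have hzero : ∑ i, (c i : ℝ) * ⟪R.simple i, lam⟫ = 0 := by
    simpa only [hc, sum_inner, real_inner_smul_left] using h
  rw [hc]
  refine Submodule.sum_mem _ fun i _ => ?_
  rcases mul_eq_zero.mp ((Finset.sum_eq_zero_iff_of_nonneg hterm).mp hzero i (Finset.mem_univ i))
    with hci | hi
  · rw [hci, zero_smul]
    exact Submodule.zero_mem _
  · exact Submodule.smul_mem _ _ (Submodule.subset_span ⟨i, hi, rfl⟩)

lemma pair_le_one_of_norm_le {α β : V} (hα : α ∈ R.roots) (hβ : β ∈ R.roots)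
    (hle : ‖β‖ ≤ ‖α‖) (hne : β ≠ α) : pair β α ≤ 1 := by
  obtain ⟨n, hn⟩ := R.crystal α hα β hβ
  rw [pair, hn]
  by_contra! hgt
  have htwo : (2 : ℝ) ≤ n := by exact_mod_cast (show (1 : ℤ) < n by exact_mod_cast hgt)
  have hαα : 0 < ⟪α, α⟫ := real_inner_self_pos.mpr (R.root_ne_zero α hα)
  have hβα : ⟪α, α⟫ ≤ ⟪β, α⟫ := by
    rw [div_eq_iff hαα.ne'] at hn
    nlinarith
  have hdist : ‖β - α‖ ^ 2 ≤ 0 := by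
    rw [norm_sub_sq_real, ← real_inner_self_eq_norm_sq α]
    nlinarith [norm_nonneg β, norm_nonneg α, real_inner_self_eq_norm_sq α]
  exact hne (sub_eq_zero.mp (norm_eq_zero.mp (by nlinarith [norm_nonneg (β - α)])))

def wordProd (L : List (Fin R.l)) : V ≃ₗᵢ[ℝ] V :=
  (L.map fun i => sRefl (R.simple i)).prod

@[simp]
lemma wordProd_cons (i : Fin R.l) (L : List (Fin R.l)) :
    R.wordProd (i :: L) = sRefl (R.simple i) * R.wordProd L := by
  simp [wordProd]

lemma exists_wordProd_eq {w : V ≃ₗᵢ[ℝ] V} (hw : w ∈ R.W) : ∃ L, R.wordProd L = w := by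
  induction hw using Subgroup.closure_induction with
  | mem x hx =>
    obtain ⟨i, rfl⟩ := hx
    exact ⟨[i], by simp [wordProd]⟩
  | one => exact ⟨[], rfl⟩
  | mul x y _ _ hx hy =>
    obtain ⟨L₁, rfl⟩ := hx
    obtain ⟨L₂, rfl⟩ := hy
    exact ⟨L₁ ++ L₂, by simp [wordProd]⟩
  | inv x _ hx =>
    obtain ⟨L, rfl⟩ := hx
    exact ⟨L.reverse, by
      simp [wordProd, List.prod_inv_reverse, Function.comp_def, sRefl_inv]⟩

lemma wordProd_apply_mem_roots (L : List (Fin R.l)) {β : V} (hβ : β ∈ R.roots) :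
    R.wordProd L β ∈ R.roots := by
  induction L with
  | nil => exact hβ
  | cons i L ih => exact R.sRefl_mem_roots (R.pos_subset (R.simple_mem_pos i)) ih

lemma apply_mem_roots {w : V ≃ₗᵢ[ℝ] V} (hw : w ∈ R.W) {β : V} (hβ : β ∈ R.roots) :
    w β ∈ R.roots := by
  obtain ⟨L, rfl⟩ := R.exists_wordProd_eq hw
  exact R.wordProd_apply_mem_roots L hβ

lemma symm_apply_mem_roots {w : V ≃ₗᵢ[ℝ] V} (hw : w ∈ R.W) {β : V} (hβ : β ∈ R.roots) :
    w.symm β ∈ R.roots :=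
  R.apply_mem_roots (inv_mem hw) hβ

lemma inversions_sRefl_mul_subset (i : Fin R.l) (w : V ≃ₗᵢ[ℝ] V) :
    R.inversions (sRefl (R.simple i) * w) ⊆
      insert (R.simple i) ((R.inversions w).image (sRefl (R.simple i))) := by
  intro x hx
  rw [mem_inversions] at hx
  rw [Finset.mem_insert, Finset.mem_image]
  by_cases hxi : x = R.simple i
  · exact Or.inl hxi
  refine Or.inr ⟨sRefl (R.simple i) x, R.mem_inversions.mpr
    ⟨R.sRefl_simple_mem_pos hx.1 hxi, ?_⟩, sRefl_sRefl _ _⟩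
  have hsymm : (sRefl (R.simple i)).symm x = sRefl (R.simple i) x := by rw [sRefl_symm]
  exact hsymm ▸ hx.2

lemma card_inversions_wordProd_le (L : List (Fin R.l)) :
    (R.inversions (R.wordProd L)).card ≤ L.length := by
  induction L with
  | nil =>
    exact (Finset.card_eq_zero.mpr (Finset.filter_eq_empty_iff.mpr
      fun _ hx => R.neg_notMem_pos hx)).le
  | cons i L ih =>
    calc (R.inversions (R.wordProd (i :: L))).card
        ≤ ((R.inversions (R.wordProd L)).image (sRefl (R.simple i))).card + 1 := by
          rw [wordProd_cons]
          exact (Finset.card_le_card (R.inversions_sRefl_mul_subset i _)).trans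
            (Finset.card_insert_le _ _)
      _ ≤ (i :: L).length := by
          simpa using (Finset.card_image_le.trans ih)

lemma ofFn_prod_eq_wordProd {k : ℕ} (f : Fin k → Fin R.l) :
    (List.ofFn fun j => sRefl (R.simple (f j))).prod = R.wordProd (List.ofFn f) := by
  simp [wordProd, List.map_ofFn, Function.comp_def]

lemma exists_wordProd_ofFn_len_eq {w : V ≃ₗᵢ[ℝ] V} (hw : w ∈ R.W) :
    ∃ f : Fin (R.len w) → Fin R.l, R.wordProd (List.ofFn f) = w := by
  obtain ⟨L, hL⟩ := R.exists_wordProd_eq hw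
  have hne : {k : ℕ | ∃ f : Fin k → Fin R.l,
      w = (List.ofFn fun j => sRefl (R.simple (f j))).prod}.Nonempty :=
    ⟨L.length, L.get, by rw [ofFn_prod_eq_wordProd, List.ofFn_get, hL]⟩
  obtain ⟨f, hf⟩ := Nat.sInf_mem hne
  exact ⟨f, (R.ofFn_prod_eq_wordProd f).symm.trans hf.symm⟩

lemma card_inversions_le_len {w : V ≃ₗᵢ[ℝ] V} (hw : w ∈ R.W) :
    (R.inversions w).card ≤ R.len w := by
  obtain ⟨f, hf⟩ := R.exists_wordProd_ofFn_len_eq hw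
  simpa [hf] using R.card_inversions_wordProd_le (List.ofFn f)

lemma image_pos_eq {w : V ≃ₗᵢ[ℝ] V} (hw : w ∈ R.W) :
    R.pos.image w = (R.pos \ R.inversions w) ∪ (R.inversions w).image Neg.neg := by
  ext x
  have himage : (∃ a ∈ R.pos, w a = x) ↔ w.symm x ∈ R.pos :=
    ⟨by rintro ⟨a, ha, rfl⟩; simpa using ha, fun h => ⟨_, h, w.apply_symm_apply x⟩⟩
  have hneg : (∃ a, (a ∈ R.pos ∧ -(w.symm a) ∈ R.pos) ∧ -a = x) ↔
      -x ∈ R.pos ∧ w.symm x ∈ R.pos :=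
    ⟨by rintro ⟨a, ha, rfl⟩; simpa using ha, fun h => ⟨-x, by simpa using h, neg_neg x⟩⟩
  simp only [Finset.mem_union, Finset.mem_sdiff, Finset.mem_image, mem_inversions, himage, hneg]
  by_cases hx : x ∈ R.roots
  · have := R.pos_iff x hx
    have := R.pos_iff _ (R.symm_apply_mem_roots hw hx)
    tauto
  · have hy : w.symm x ∉ R.pos := fun h =>
      hx (by simpa using R.apply_mem_roots hw (R.pos_subset h))
    have hx' : x ∉ R.pos := fun h => hx (R.pos_subset h)
    tauto

lemma sum_inversions {w : V ≃ₗᵢ[ℝ] V} (hw : w ∈ R.W) :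
    ∑ ψ ∈ R.inversions w, ψ = R.ρ - w R.ρ := by
  have hdisj : Disjoint (R.pos \ R.inversions w) ((R.inversions w).image Neg.neg) := by
    refine Finset.disjoint_left.mpr fun x hx hx' => ?_
    obtain ⟨ψ, hψ, rfl⟩ := Finset.mem_image.mp hx'
    exact R.neg_notMem_pos (Finset.mem_sdiff.mp hx).1
      (by simpa using R.inversions_subset_pos w hψ)
  have hsum : ∑ α ∈ R.pos, w α = ∑ α ∈ R.pos, α - 2 • ∑ ψ ∈ R.inversions w, ψ := by
    rw [show ∑ α ∈ R.pos, w α = ∑ x ∈ R.pos.image w, x from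
        (Finset.sum_image (f := id) w.injective.injOn).symm,
      R.image_pos_eq hw, Finset.sum_union hdisj,
      Finset.sum_sdiff_eq_sub (R.inversions_subset_pos w), Finset.sum_image neg_injective.injOn, Finset.sum_neg_distrib]
    abel
  rw [ρ, map_smul, map_sum, hsum]
  module

lemma inner_sum_inversions {w : V ≃ₗᵢ[ℝ] V} (hw : w ∈ R.W) (α : V) :
    ⟪α, ∑ ψ ∈ R.inversions w, ψ⟫ = ⟪α - w.symm α, R.ρ⟫ := by
  rw [R.sum_inversions hw, inner_sub_right, inner_sub_left, real_inner_comm R.ρ α,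
    w.symm.inner_map_eq_flip, LinearIsometryEquiv.symm_symm]

end RootSystemData

namespace IrredRootSystemData

open RootSystemData Classical

variable {V : Type} [NormedAddCommGroup V] [InnerProductSpace ℝ V] (R : IrredRootSystemData V)

lemma theta_mem_roots : R.θ ∈ R.roots := R.pos_subset R.θ_mem_pos

lemma theta_ne_zero : R.θ ≠ 0 := R.root_ne_zero _ R.theta_mem_roots

lemma inner_theta_self_pos : 0 < ⟪R.θ, R.θ⟫ := real_inner_self_pos.mpr R.theta_ne_zero

lemma sub_mem_pos {ψ : V} (hψ : ψ ∈ R.pos) (hne : R.θ ≠ ψ) (hip : 0 < ⟪R.θ, ψ⟫) :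
    R.θ - ψ ∈ R.pos := by
  obtain ⟨c, hc⟩ := R.θ_highest ψ hψ
  exact R.mem_pos_of_eq_sum_nsmul_simple
    (R.sub_mem _ R.theta_mem_roots _ (R.pos_subset hψ) hip hne) hc

lemma L_eq_sum_pair_inversions {w : V ≃ₗᵢ[ℝ] V} (hw : w ∈ R.W) {φ : V} (hwφ : w φ = R.θ) :
    R.L φ = ∑ ψ ∈ R.inversions w, pair ψ R.θ := by
  rw [L, ← w.symm_apply_eq.mpr hwφ.symm, ← R.inner_sum_inversions hw]
  simp only [pair, ← Finset.sum_div, ← Finset.mul_sum, inner_sum, real_inner_comm R.θ]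

lemma card_inversions_eq_len_and_pair_eq_one {φ : V} (hφ : φ ∈ R.pos) {w : V ≃ₗᵢ[ℝ] V}
    (hw : w ∈ R.W) (hwφ : w φ = R.θ) (hlen : (R.len w : ℝ) = R.L φ) :
    (R.inversions w).card = R.len w ∧ ∀ ψ ∈ R.inversions w, pair ψ R.θ = 1 := by
  have hθ : R.θ ∉ R.inversions w := fun h =>
    R.neg_notMem_pos hφ (by simpa [← hwφ] using (R.mem_inversions.mp h).2)
  have hle : ∀ ψ ∈ R.inversions w, pair ψ R.θ ≤ 1 := fun ψ hψ => by
    have hψ' := R.pos_subset (R.inversions_subset_pos w hψ)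
    exact R.pair_le_one_of_norm_le R.theta_mem_roots hψ' (R.θ_long _ hψ')
      (ne_of_mem_of_not_mem hψ hθ)
  have hsum : ∑ ψ ∈ R.inversions w, pair ψ R.θ = R.len w := by
    rw [hlen, R.L_eq_sum_pair_inversions hw hwφ]
  have hcard : (R.inversions w).card = R.len w := by
    refine le_antisymm (R.card_inversions_le_len hw) ?_
    have := Finset.sum_le_sum hle
    rw [hsum, Finset.sum_const, nsmul_one] at this
    exact_mod_cast this
  refine ⟨hcard, (Finset.sum_eq_sum_iff_of_le hle).mp ?_⟩
  rw [hsum, Finset.sum_const, nsmul_one, hcard]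

variable {w : V ≃ₗᵢ[ℝ] V}

lemma apply_theta_mem_pos (hw : w ∈ R.W) (hwθ : ⟪w R.θ, R.θ⟫ = 0)
    (hI : ∀ ψ ∈ R.inversions w, 2 * ⟪ψ, R.θ⟫ = ⟪R.θ, R.θ⟫) : w R.θ ∈ R.pos := by
  by_contra h
  have hmem : -(w R.θ) ∈ R.inversions w := R.mem_inversions.mpr
    ⟨R.neg_mem_pos_of_notMem_pos (R.apply_mem_roots hw R.theta_mem_roots) h,
      by simpa using R.θ_mem_pos⟩
  have := hI _ hmem
  rw [inner_neg_left, hwθ] at this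
  linarith [R.inner_theta_self_pos]

/-- The roots of `a^{φ,min⁺}`, for `w` the minimal element with `wφ = θ`. -/
def minPlusRoots (w : V ≃ₗᵢ[ℝ] V) : Finset V :=
  insert (w R.θ) (insert R.θ ((R.inversions w).image fun ψ => R.θ - ψ))

lemma inner_theta_pos_of_mem_insert_image (hI : ∀ ψ ∈ R.inversions w, 2 * ⟪ψ, R.θ⟫ = ⟪R.θ, R.θ⟫)
    {x : V} (hx : x ∈ insert R.θ ((R.inversions w).image fun ψ => R.θ - ψ)) :
    0 < ⟪x, R.θ⟫ := by
  rcases Finset.mem_insert.mp hx with rfl | hx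
  · exact R.inner_theta_self_pos
  · obtain ⟨ψ, hψ, rfl⟩ := Finset.mem_image.mp hx
    rw [inner_sub_left]
    linarith [hI ψ hψ, R.inner_theta_self_pos]

lemma theta_notMem_image_sub (w : V ≃ₗᵢ[ℝ] V) :
    R.θ ∉ (R.inversions w).image fun ψ => R.θ - ψ := by
  simp only [Finset.mem_image, sub_eq_self, not_exists, not_and]
  exact fun ψ hψ => R.root_ne_zero ψ (R.pos_subset (R.inversions_subset_pos w hψ))

lemma card_minPlusRoots (hwθ : ⟪w R.θ, R.θ⟫ = 0)
    (hI : ∀ ψ ∈ R.inversions w, 2 * ⟪ψ, R.θ⟫ = ⟪R.θ, R.θ⟫) :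
    (R.minPlusRoots w).card = (R.inversions w).card + 2 := by
  rw [minPlusRoots,
    Finset.card_insert_of_notMem fun h => (R.inner_theta_pos_of_mem_insert_image hI h).ne' hwθ,
    Finset.card_insert_of_notMem (R.theta_notMem_image_sub w),
    Finset.card_image_of_injective _ sub_right_injective]

lemma sum_minPlusRoots (hwθ : ⟪w R.θ, R.θ⟫ = 0)
    (hI : ∀ ψ ∈ R.inversions w, 2 * ⟪ψ, R.θ⟫ = ⟪R.θ, R.θ⟫) :
    ∑ χ ∈ R.minPlusRoots w, χ = w R.θ + R.θ + ∑ ψ ∈ R.inversions w, (R.θ - ψ) := by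
  rw [minPlusRoots,
    Finset.sum_insert fun h => (R.inner_theta_pos_of_mem_insert_image hI h).ne' hwθ,
    Finset.sum_insert (R.theta_notMem_image_sub w),
    Finset.sum_image sub_right_injective.injOn, add_assoc]

lemma minPlusRoots_subset_pos (hwθ : w R.θ ∈ R.pos)
    (hI : ∀ ψ ∈ R.inversions w, 2 * ⟪ψ, R.θ⟫ = ⟪R.θ, R.θ⟫) : R.minPlusRoots w ⊆ R.pos := by
  intro x hx
  simp only [minPlusRoots, Finset.mem_insert, Finset.mem_image] at hx
  rcases hx with rfl | rfl | ⟨ψ, hψ, rfl⟩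
  · exact hwθ
  · exact R.θ_mem_pos
  · have hψθ := hI ψ hψ
    have hθθ := R.inner_theta_self_pos
    refine R.sub_mem_pos (R.inversions_subset_pos w hψ) ?_ ?_
    · rintro rfl
      linarith
    · rw [real_inner_comm]
      linarith

lemma two_mul_inner_rho_theta_add_self_eq_one (hnorm : ⟪R.θ, R.θ⟫ = 1 / R.dualCox) :
    2 * ⟪R.ρ, R.θ⟫ + ⟪R.θ, R.θ⟫ = 1 := by
  have hθθ := R.inner_theta_self_pos.ne'
  rw [dualCox, pair] at hnorm
  field_simp at hnorm
  rwa [eq_comm, one_div, inv_eq_one] at hnorm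

lemma norm_smul_theta_add_apply_sq_sub (hnorm : ⟪R.θ, R.θ⟫ = 1 / R.dualCox)
    (hwθ : ⟪w R.θ, R.θ⟫ = 0) {n : ℝ} (hn : n = R.L (w.symm R.θ)) :
    ‖(n + 1) • R.θ + w (R.ρ + R.θ)‖ ^ 2 - ‖R.ρ‖ ^ 2 = n + 2 := by
  have hθθ := R.inner_theta_self_pos
  have hn' : n * ⟪R.θ, R.θ⟫ = 2 * ⟪R.ρ, R.θ⟫ - 2 * ⟪w R.ρ, R.θ⟫ := by
    rw [hn, L, div_mul_cancel₀ _ hθθ.ne', inner_sub_left, w.symm.inner_map_eq_flip,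
      LinearIsometryEquiv.symm_symm, real_inner_comm R.ρ, real_inner_comm (w R.ρ)]
    ring
  have hg := R.two_mul_inner_rho_theta_add_self_eq_one hnorm
  simp only [← real_inner_self_eq_norm_sq, inner_add_left, inner_add_right, real_inner_smul_left,
    real_inner_smul_right, map_add, LinearIsometryEquiv.inner_map_map]
  rw [real_inner_comm (w R.ρ), real_inner_comm (w R.θ), hwθ, real_inner_comm R.ρ R.θ]
  linear_combination (n + 1) * hn' + (n + 2) * hg

end IrredRootSystemData

open Classical

theorem abelian_ideal_a_phi_min_plus (R : IrredRootSystemData V)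
    (hnorm : ⟪R.θ, R.θ⟫ = 1 / R.dualCox)
    (φ : V) (hφ : φ ∈ R.pos) (hperp : ⟪φ, R.θ⟫ = 0)
    (w : V ≃ₗᵢ[ℝ] V) (hwW : w ∈ R.W) (hwφ : w φ = R.θ)
    (hlen : (R.len w : ℝ) = R.L φ)
    (Ψ' : Finset V)
    (hΨ' : Ψ' = insert (w R.θ)
      (insert R.θ ((R.inversions w).image fun ψ => R.θ - ψ))) :
    w R.θ ∈ R.pos ∧ ⟪w R.θ, R.θ⟫ = 0 ∧
    w R.θ ∈ Submodule.span ℝ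
      {α : V | ∃ i, ⟪R.simple i, R.θ⟫ = 0 ∧ α = R.simple i} ∧
    Ψ' ⊆ R.pos ∧ Ψ'.card = R.len w + 2 ∧
    ‖R.ρ + ∑ χ ∈ Ψ', χ‖ ^ 2 - ‖R.ρ‖ ^ 2 = (Ψ'.card : ℝ) := by
  obtain ⟨hcard, hpair⟩ := R.card_inversions_eq_len_and_pair_eq_one hφ hwW hwφ hlen
  have hI : ∀ ψ ∈ R.inversions w, 2 * ⟪ψ, R.θ⟫ = ⟪R.θ, R.θ⟫ := fun ψ hψ =>
    RootSystemData.two_mul_inner_eq_of_pair_eq_one R.theta_ne_zero (hpair ψ hψ)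
  have hφθ : w.symm R.θ = φ := w.symm_apply_eq.mpr hwφ.symm
  have hwθ : ⟪w R.θ, R.θ⟫ = 0 := by
    rw [w.inner_map_eq_flip, hφθ, real_inner_comm, hperp]
  have hwθpos := R.apply_theta_mem_pos hwW hwθ hI
  obtain rfl : Ψ' = R.minPlusRoots w := hΨ'
  have hvec : R.ρ + ∑ χ ∈ R.minPlusRoots w, χ = ((R.len w : ℝ) + 1) • R.θ + w (R.ρ + R.θ) := by
    rw [R.sum_minPlusRoots hwθ hI, Finset.sum_sub_distrib, Finset.sum_const, hcard,
      R.sum_inversions hwW, map_add, ← Nat.cast_smul_eq_nsmul ℝ]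
    module
  refine ⟨hwθpos, hwθ, R.mem_span_simple_of_inner_eq_zero R.θ_dominant hwθpos hwθ,
    R.minPlusRoots_subset_pos hwθpos hI, by rw [R.card_minPlusRoots hwθ hI, hcard], ?_⟩
  rw [hvec, R.norm_smul_theta_add_apply_sq_sub hnorm hwθ (hφθ ▸ hlen), R.card_minPlusRoots hwθ hI,
    hcard]
  push_cast
  ring
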